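/- arXiv:1003.3991 — 3 statements merged into one kernel-verified Lean document; each statement's English description precedes it below -/
import Mathlib

section
/- For every real θ: γR 1 θ = γ5 * (1 − D θ), where 1 denotes the 2×2 identity matrix. -/
open Real Matrix

/-- The chirality matrix `γ5` in the two-dimensional eigenvalue-pair representation. -/
noncomputable def γ5 : Matrix (Fin 2) (Fin 2) ℝ := !![1, 0; 0, -1]

/-- The overlap Dirac operator on a non-zero eigenvalue pair. -/
noncomputable def D (θ : ℝ) : Matrix (Fin 2) (Fin 2) ℝ :=
  (2 * Real.cos θ) • !![Real.cos θ, Real.sin θ; -Real.sin θ, Real.cos θ]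

/-- The family of right chiral γ-matrices `γ_R^(η)`. -/
noncomputable def γR (η θ : ℝ) : Matrix (Fin 2) (Fin 2) ℝ :=
  !![Real.cos ((1 + η) * (θ - π / 2)), Real.sin ((1 + η) * (θ - π / 2));
     Real.sin ((1 + η) * (θ - π / 2)), -Real.cos ((1 + η) * (θ - π / 2))]

/-- The family of left chiral γ-matrices `γ_L^(η) = γ5 γ_R^(−η) γ5`. -/
noncomputable def γL (η θ : ℝ) : Matrix (Fin 2) (Fin 2) ℝ := γ5 * γR (-η) θ * γ5

/-- By the double-angle formulas, `D θ` is `1` plus the rotation by `-2θ`. -/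
theorem one_sub_D (θ : ℝ) :
    1 - D θ = -!![cos (2 * θ), sin (2 * θ); -sin (2 * θ), cos (2 * θ)] := by
  rw [D, one_fin_two, cos_two_mul, sin_two_mul]
  ext i j
  fin_cases i <;> fin_cases j <;> simp <;> ring

theorem γR_one (θ : ℝ) :
    γR 1 θ = -!![cos (2 * θ), sin (2 * θ); sin (2 * θ), -cos (2 * θ)] := by
  have hangle : (1 + 1) * (θ - π / 2) = 2 * θ - π := by ring
  rw [γR, hangle, cos_sub_pi, sin_sub_pi]
  ext i j
  fin_cases i <;> fin_cases j <;> simp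

theorem γ5_mul (a b c d : ℝ) : γ5 * !![a, b; c, d] = !![a, b; -c, -d] := by
  rw [γ5, mul_fin_two]
  simp

/-- Lemma B.2 of the paper: `γ_R^(1) = γ5 (1 − D)`. -/
theorem γR_one_eq (θ : ℝ) : γR 1 θ = γ5 * (1 - D θ) := by
  rw [one_sub_D, mul_neg, γ5_mul, γR_one, neg_neg]
end

section
/- For all real η₁, η₂, θ: γL η₁ θ * γL η₂ θ = γ5 * γL (η₂ − η₁ + 1) θ. -/
open Real Matrix

/-! Every `γL η θ` is the reflection matrix of angle `(η - 1) (θ - π/2)`, and the product of the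
reflection matrices of angles `α` and `β` is `γ5` times the reflection matrix of angle `β - α`. -/

noncomputable def reflectionMatrix (α : ℝ) : Matrix (Fin 2) (Fin 2) ℝ :=
  !![Real.cos α, Real.sin α; Real.sin α, -Real.cos α]

theorem γR_eq_reflectionMatrix (η θ : ℝ) :
    γR η θ = reflectionMatrix ((1 + η) * (θ - π / 2)) :=
  rfl

theorem γ5_mul_reflectionMatrix_mul_γ5 (α : ℝ) :
    γ5 * reflectionMatrix α * γ5 = reflectionMatrix (-α) := by
  ext i j
  fin_cases i <;> fin_cases j <;> simp [γ5, reflectionMatrix, Matrix.mul_apply]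

theorem γL_eq_reflectionMatrix (η θ : ℝ) :
    γL η θ = reflectionMatrix ((η - 1) * (θ - π / 2)) := by
  rw [γL, γR_eq_reflectionMatrix, γ5_mul_reflectionMatrix_mul_γ5]
  congr 1; ring

theorem reflectionMatrix_mul_reflectionMatrix (α β : ℝ) :
    reflectionMatrix α * reflectionMatrix β = γ5 * reflectionMatrix (β - α) := by
  ext i j
  fin_cases i <;> fin_cases j <;>
    simp [γ5, reflectionMatrix, Matrix.mul_apply, Real.cos_sub, Real.sin_sub] <;> ring

/-- Lemma B.5 of the paper: `γ_L^(η₁) γ_L^(η₂) = γ5 γ_L^(η₂ − η₁ + 1)`. -/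
theorem γL_mul_γL (η₁ η₂ θ : ℝ) :
    γL η₁ θ * γL η₂ θ = γ5 * γL (η₂ - η₁ + 1) θ := by
  rw [γL_eq_reflectionMatrix, γL_eq_reflectionMatrix, γL_eq_reflectionMatrix,
    reflectionMatrix_mul_reflectionMatrix]
  congr 2; ring
end

section
/- For all real η and θ: γ5 * γR η θ * D θ = D θ * γ5 * γR η θ. -/
open Real Matrix

/-! `γ5` times the reflection `γR η θ` is a rotation, and `D θ` is a multiple of a rotation;
plane rotations commute. -/

/-- The matrix of multiplication by `a - b i` on `R[i] ≅ R²` (column vectors). -/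
def complexMulMatrix {R : Type*} [CommRing R] (a b : R) : Matrix (Fin 2) (Fin 2) R :=
  !![a, b; -b, a]

theorem complexMulMatrix_commute {R : Type*} [CommRing R] (a b c d : R) :
    Commute (complexMulMatrix a b) (complexMulMatrix c d) := by
  rw [Commute, SemiconjBy, complexMulMatrix, complexMulMatrix, Matrix.mul_fin_two,
    Matrix.mul_fin_two]
  ring_nf

theorem γ5_mul_γR (η θ : ℝ) :
    γ5 * γR η θ =
      complexMulMatrix (Real.cos ((1 + η) * (θ - π / 2))) (Real.sin ((1 + η) * (θ - π / 2))) := by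
  simp [γ5, γR, complexMulMatrix]

theorem D_eq_smul_complexMulMatrix (θ : ℝ) :
    D θ = (2 * Real.cos θ) • complexMulMatrix (Real.cos θ) (Real.sin θ) :=
  rfl

/-- Lemma B.9 of the paper (equation (eq:resultneededinCP)):
`γ5 γ_R^(η) D = D γ5 γ_R^(η)`. -/
theorem γ5_γR_commutes_with_D (η θ : ℝ) :
    γ5 * γR η θ * D θ = D θ * (γ5 * γR η θ) := by
  rw [γ5_mul_γR, D_eq_smul_complexMulMatrix]
  exact ((complexMulMatrix_commute _ _ _ _).smul_right _).eq
end
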